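/- arXiv:2003.13139 — 3 statements merged into one kernel-verified Lean document; each statement's English description precedes it below -/
import Mathlib

section
/- There exists Δ₀ such that for every finite simple graph G = (V,E) with maximum degree Δ ≥ Δ₀ and minimum degree δ ≥ 10^{20}·ln Δ, there exists a subset U ⊆ V such that for every vertex v ∈ V one has |d_U(v) − 10^{-4}·d(v)| ≤ 10^{-6}·d(v). -/
/-!
Keep every vertex independently with probability `10⁻⁴`. By a Chernoff bound the bad event
`A v`, that `d_U(v)` deviates from `10⁻⁴ d(v)` by more than `10⁻⁶ d(v)`, has probability at most
`2 exp (-10⁻⁹ d(v)) ≤ 2 exp (-10⁻⁹ δ)`, which is tiny compared with `Δ⁻²` because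
`δ ≥ 10²⁰ ln Δ`. The event `A v` depends only on the coins of `N(v)`, so it is mutually
independent of all `A u` with `N(u) ∩ N(v) = ∅`, that is of all but at most `Δ²` events, and the
symmetric Lovász Local Lemma shows that with positive probability no bad event occurs.
-/

def dIn {V : Type} [Fintype V] [DecidableEq V] (G : SimpleGraph V) [DecidableRel G.Adj]
    (A : Finset V) (v : V) : ℕ :=
  (G.neighborFinset v ∩ A).card

open MeasureTheory ProbabilityTheory Finset unitInterval Real Function

section LocalLemma

variable {Ω ι : Type*} [MeasurableSpace Ω] {μ : Measure Ω} [IsProbabilityMeasure μ]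
  {A : ι → Set Ω} {Γ : ι → Finset ι} {q : ℝ} {D : ℕ}

lemma measureReal_biInter_compl_le_add_sum (S T : Finset ι) [DecidableEq ι] :
    μ.real (⋂ j ∈ S \ T, (A j)ᶜ) ≤
      μ.real (⋂ j ∈ S, (A j)ᶜ) + ∑ j ∈ S ∩ T, μ.real (A j ∩ ⋂ k ∈ S \ T, (A k)ᶜ) := by
  have hsub : ⋂ j ∈ S \ T, (A j)ᶜ ⊆
      (⋂ j ∈ S, (A j)ᶜ) ∪ ⋃ j ∈ S ∩ T, (A j ∩ ⋂ k ∈ S \ T, (A k)ᶜ) := by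
    intro ω hω
    by_cases hS : ω ∈ ⋂ j ∈ S, (A j)ᶜ
    · exact Or.inl hS
    · simp only [Set.mem_iInter, Set.mem_compl_iff, not_forall, not_not] at hS
      obtain ⟨j, hjS, hj⟩ := hS
      have hjT : j ∈ T := by
        by_contra hjT
        exact (Set.mem_iInter₂.mp hω j (mem_sdiff.mpr ⟨hjS, hjT⟩)) hj
      exact Or.inr (Set.mem_biUnion (mem_inter.mpr ⟨hjS, hjT⟩) ⟨hj, hω⟩)
  calc μ.real (⋂ j ∈ S \ T, (A j)ᶜ)
      ≤ μ.real ((⋂ j ∈ S, (A j)ᶜ) ∪ ⋃ j ∈ S ∩ T, (A j ∩ ⋂ k ∈ S \ T, (A k)ᶜ)) :=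
        measureReal_mono hsub
    _ ≤ _ := (measureReal_union_le _ _).trans
        (by gcongr; exact measureReal_biUnion_finset_le _ _)

-- `hind` encodes that `A i` is mutually independent of the events `A j`, `j ∉ Γ i`.
variable (hA : ∀ i, μ.real (A i) ≤ q) (hΓ : ∀ i, #(Γ i) ≤ D) (hqD : 4 * q * D ≤ 1)
  (hind : ∀ i S, Disjoint S (Γ i) →
    μ.real (A i ∩ ⋂ j ∈ S, (A j)ᶜ) ≤ μ.real (A i) * μ.real (⋂ j ∈ S, (A j)ᶜ))
include hA hΓ hqD hind

lemma measureReal_inter_biInter_compl_le [DecidableEq ι] (S : Finset ι) (i : ι) :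
    μ.real (A i ∩ ⋂ j ∈ S, (A j)ᶜ) ≤ 2 * q * μ.real (⋂ j ∈ S, (A j)ᶜ) := by
  induction S using Finset.strongInduction generalizing i with
  | H S ih =>
  have hq : 0 ≤ q := measureReal_nonneg.trans (hA i)
  set P : ℝ := μ.real (⋂ j ∈ S, (A j)ᶜ)
  set P₂ : ℝ := μ.real (⋂ j ∈ S \ Γ i, (A j)ᶜ)
  -- Dropping the events that `A i` may depend on costs at most a factor `2`: union bound plus the
  -- induction hypothesis for the strictly smaller set `S \ Γ i`.
  have hP₂ : P₂ ≤ 2 * P := by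
    have hsum : ∑ j ∈ S ∩ Γ i, μ.real (A j ∩ ⋂ k ∈ S \ Γ i, (A k)ᶜ) ≤ P₂ / 2 := by
      calc ∑ j ∈ S ∩ Γ i, μ.real (A j ∩ ⋂ k ∈ S \ Γ i, (A k)ᶜ)
          ≤ ∑ _j ∈ S ∩ Γ i, 2 * q * P₂ := by
            refine sum_le_sum fun j hj => ih _ ?_ j
            rw [mem_inter] at hj
            exact (ssubset_iff_of_subset sdiff_subset).mpr
              ⟨j, hj.1, fun h => (mem_sdiff.1 h).2 hj.2⟩
        _ = #(S ∩ Γ i) * (2 * q * P₂) := by rw [sum_const, nsmul_eq_mul]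
        _ ≤ D * (2 * q * P₂) := by
            refine mul_le_mul_of_nonneg_right ?_ (mul_nonneg (by linarith) measureReal_nonneg)
            exact_mod_cast (card_le_card inter_subset_right).trans (hΓ i)
        _ ≤ P₂ / 2 := by nlinarith [measureReal_nonneg (μ := μ) (s := ⋂ j ∈ S \ Γ i, (A j)ᶜ)]
    linarith [measureReal_biInter_compl_le_add_sum (μ := μ) (A := A) S (Γ i)]
  calc μ.real (A i ∩ ⋂ j ∈ S, (A j)ᶜ)
      ≤ μ.real (A i ∩ ⋂ j ∈ S \ Γ i, (A j)ᶜ) := by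
        refine measureReal_mono (Set.inter_subset_inter_right _ ?_)
        exact Set.biInter_subset_biInter_left (sdiff_subset (s := S) (t := Γ i))
    _ ≤ μ.real (A i) * P₂ := hind i _ sdiff_disjoint
    _ ≤ q * (2 * P) := mul_le_mul (hA i) hP₂ measureReal_nonneg hq
    _ = 2 * q * P := by ring

lemma one_sub_two_mul_pow_card_le_measureReal_biInter_compl [DecidableEq ι] (hq : 2 * q ≤ 1)
    (S : Finset ι) : (1 - 2 * q) ^ #S ≤ μ.real (⋂ j ∈ S, (A j)ᶜ) := by
  induction S using Finset.induction_on with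
  | empty => simp
  | insert i S hi ih =>
    have hsplit : μ.real (⋂ j ∈ S, (A j)ᶜ) ≤
        μ.real (A i ∩ ⋂ j ∈ S, (A j)ᶜ) + μ.real (⋂ j ∈ insert i S, (A j)ᶜ) := by
      rw [set_biInter_insert, Set.inter_comm (A i)ᶜ, ← Set.sdiff_eq, Set.inter_comm (A i)]
      calc μ.real (⋂ j ∈ S, (A j)ᶜ)
          = μ.real ((⋂ j ∈ S, (A j)ᶜ) ∩ A i ∪ (⋂ j ∈ S, (A j)ᶜ) \ A i) := by
            rw [Set.inter_union_sdiff]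
        _ ≤ _ := measureReal_union_le _ _
    have := measureReal_inter_biInter_compl_le hA hΓ hqD hind S i
    rw [card_insert_of_notMem hi, pow_succ]
    nlinarith [measureReal_nonneg (μ := μ) (s := ⋂ j ∈ S, (A j)ᶜ)]

theorem measureReal_iInter_compl_pos [Fintype ι] (hq : 2 * q < 1) :
    0 < μ.real (⋂ i, (A i)ᶜ) := by
  classical
  calc (0 : ℝ) < (1 - 2 * q) ^ Fintype.card ι := pow_pos (by linarith) _
    _ ≤ μ.real (⋂ i ∈ (univ : Finset ι), (A i)ᶜ) :=
      one_sub_two_mul_pow_card_le_measureReal_biInter_compl hA hΓ hqD hind hq.le univ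
    _ = μ.real (⋂ i, (A i)ᶜ) := by simp

end LocalLemma

lemma measureReal_pi_inter_of_dependsOn {ι : Type*} [Fintype ι] {β : ι → Type*}
    [∀ i, MeasurableSpace (β i)] [∀ i, Countable (β i)] [∀ i, MeasurableSingletonClass (β i)]
    (ν : ∀ i, Measure (β i)) [∀ i, IsProbabilityMeasure (ν i)] {S T : Finset ι}
    (hST : Disjoint S T) {E F : Set (∀ i, β i)}
    (hE : DependsOn (· ∈ E) S) (hF : DependsOn (· ∈ F) T) :
    (Measure.pi ν).real (E ∩ F) = (Measure.pi ν).real E * (Measure.pi ν).real F := by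
  have hind := (iIndepFun_pi (μ := ν) (X := fun _ => id) fun _ => aemeasurable_id).indepFun_finset
    S T hST fun i => measurable_pi_apply i
  have preimage_image {R : Finset ι} {E : Set (∀ i, β i)} (hE : DependsOn (· ∈ E) R) :
      (fun ω (i : R) => ω i) ⁻¹' ((fun ω (i : R) => ω i) '' E) = E := by
    refine Set.Subset.antisymm ?_ (Set.subset_preimage_image _ _)
    rintro ω ⟨ω', hω', heq⟩
    exact (hE fun i hi => (congrFun heq ⟨i, hi⟩)).mp hω'
  have h := hind.measure_inter_preimage_eq_mul _ _
    (Set.to_countable ((fun ω (i : S) => ω i) '' E)).measurableSet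
    (Set.to_countable ((fun ω (i : T) => ω i) '' F)).measurableSet
  simp only [id, preimage_image hE, preimage_image hF] at h
  simp [measureReal_def, h]

section Chernoff
variable {ι : Type*} [Fintype ι] (p : I)

lemma mgf_ite_pi_bernoulli (i : ι) (t : ℝ) :
    mgf (fun ω : ι → Bool => if ω i then (1 : ℝ) else 0)
      (Measure.pi fun _ : ι => Ber(true, false, p)) t = p * exp t + (1 - p) := by
  refine (integral_comp_eval (μ := fun _ : ι => Ber(true, false, p)) (i := i)
    (f := fun b : Bool => exp (t * if b then 1 else 0)) (by fun_prop)).trans ?_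
  simp [integral_bernoulliMeasure]

lemma mgf_card_filter_pi_bernoulli (s : Finset ι) (t : ℝ) :
    mgf (fun ω : ι → Bool => (#{i ∈ s | ω i} : ℝ))
      (Measure.pi fun _ : ι => Ber(true, false, p)) t = (p * exp t + (1 - p)) ^ #s := by
  have hind := iIndepFun_pi (μ := fun _ : ι => Ber(true, false, p))
    (X := fun _ (b : Bool) => if b then (1 : ℝ) else 0) (fun _ => by fun_prop)
  have := hind.mgf_sum (fun _ => by fun_prop) s (t := t)
  simp only [mgf_ite_pi_bernoulli, prod_const] at this
  convert this using 2
  ext ω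
  simp only [natCast_card_filter, Finset.sum_apply]

lemma mgf_card_filter_pi_bernoulli_le (s : Finset ι) (t : ℝ) :
    mgf (fun ω : ι → Bool => (#{i ∈ s | ω i} : ℝ))
      (Measure.pi fun _ : ι => Ber(true, false, p)) t ≤ exp (p * #s * (exp t - 1)) := by
  rw [mgf_card_filter_pi_bernoulli,
    show (p : ℝ) * #s * (exp t - 1) = #s * (p * (exp t - 1)) by ring, exp_nat_mul]
  refine pow_le_pow_left₀ ?_ ?_ _
  · nlinarith [exp_pos t, p.2.1, p.2.2]
  · linarith [add_one_le_exp (p * (exp t - 1))]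

lemma measureReal_le_card_filter_le {t : ℝ} (ht : 0 ≤ t) (s : Finset ι) (a : ℝ) :
    (Measure.pi fun _ : ι => Ber(true, false, p)).real {ω | a ≤ #{i ∈ s | ω i}} ≤
      exp (-t * a + p * #s * (exp t - 1)) := by
  refine (measure_ge_le_exp_mul_mgf a ht (.of_finite)).trans ?_
  rw [exp_add]
  gcongr
  exact mgf_card_filter_pi_bernoulli_le p s t

lemma measureReal_card_filter_le_le {t : ℝ} (ht : 0 ≤ t) (s : Finset ι) (a : ℝ) :
    (Measure.pi fun _ : ι => Ber(true, false, p)).real {ω | #{i ∈ s | ω i} ≤ a} ≤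
      exp (t * a + p * #s * (exp (-t) - 1)) := by
  refine (measure_le_le_exp_mul_mgf a (neg_nonpos.mpr ht) (.of_finite)).trans ?_
  rw [exp_add, neg_neg]
  gcongr
  exact mgf_card_filter_pi_bernoulli_le p s (-t)

lemma measureReal_card_filter_deviation_le (hp : (p : ℝ) = 1e-4) (s : Finset ι) :
    (Measure.pi fun _ : ι => Ber(true, false, p)).real
        {ω | (1e-6 : ℝ) * #s < |(#{i ∈ s | ω i} : ℝ) - 1e-4 * #s|} ≤ 2 * exp (-1e-9 * #s) := by
  have hd : (0 : ℝ) ≤ #s := Nat.cast_nonneg _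
  have hexp : exp (1 / 200) ≤ 200 / 199 := by
    have := exp_bound_div_one_sub_of_interval (x := 1 / 200) (by norm_num) (by norm_num)
    norm_num at this ⊢; exact this
  have hexp_neg : exp (-(1 / 200)) ≤ 200 / 201 := by
    rw [exp_neg, inv_le_comm₀ (exp_pos _) (by norm_num)]
    linarith [add_one_le_exp (1 / 200)]
  have hupper := measureReal_le_card_filter_le p (t := 1 / 200) (by norm_num) s
    ((1e-4 + 1e-6) * #s)
  have hlower := measureReal_card_filter_le_le p (t := 1 / 200) (by norm_num) s
    ((1e-4 - 1e-6) * #s)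
  rw [hp] at hupper hlower
  calc _ ≤ (Measure.pi fun _ : ι => Ber(true, false, p)).real
          ({ω | (1e-4 + 1e-6 : ℝ) * #s ≤ #{i ∈ s | ω i}} ∪
            {ω | (#{i ∈ s | ω i} : ℝ) ≤ (1e-4 - 1e-6) * #s}) := by
        refine measureReal_mono fun ω hω => ?_
        simp only [Set.mem_ofPred_eq, Set.mem_union] at hω ⊢
        rcases lt_abs.mp hω with h | h
        · left; linarith
        · right; linarith
    _ ≤ exp (-1e-9 * #s) + exp (-1e-9 * #s) := by
        refine (measureReal_union_le _ _).trans (add_le_add ?_ ?_)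
        · exact hupper.trans (exp_le_exp.mpr (by nlinarith))
        · exact hlower.trans (exp_le_exp.mpr (by nlinarith))
    _ = 2 * exp (-1e-9 * #s) := by ring

end Chernoff

section Graph

variable {V : Type*} [Fintype V] [DecidableEq V] (G : SimpleGraph V) [DecidableRel G.Adj]

lemma card_biUnion_neighborFinset_le (v : V) :
    #((G.neighborFinset v).biUnion (G.neighborFinset ·)) ≤ G.maxDegree ^ 2 :=
  calc #((G.neighborFinset v).biUnion (G.neighborFinset ·))
      ≤ ∑ u ∈ G.neighborFinset v, #(G.neighborFinset u) := card_biUnion_le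
    _ ≤ ∑ _u ∈ G.neighborFinset v, G.maxDegree :=
        sum_le_sum fun u _ =>
          (G.card_neighborFinset_eq_degree u).trans_le (G.degree_le_maxDegree u)
    _ ≤ G.maxDegree ^ 2 := by
        rw [sum_const, smul_eq_mul, G.card_neighborFinset_eq_degree, sq]
        exact Nat.mul_le_mul_right _ (G.degree_le_maxDegree v)

lemma disjoint_neighborFinset_of_notMem_biUnion {u v : V}
    (h : u ∉ (G.neighborFinset v).biUnion (G.neighborFinset ·)) :
    Disjoint (G.neighborFinset u) (G.neighborFinset v) := by
  refine disjoint_left.mpr fun w hwu hwv => h (mem_biUnion.mpr ⟨w, hwv, ?_⟩)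
  rw [SimpleGraph.mem_neighborFinset] at hwu ⊢
  exact hwu.symm

end Graph

lemma eight_mul_sq_add_one_mul_exp_le_one {Δ δ : ℝ} (hΔ : 2 ≤ Δ) (hδ : 1e20 * log Δ ≤ δ) :
    8 * (Δ ^ 2 + 1) * exp (-1e-9 * δ) ≤ 1 := by
  have hlog : 0 ≤ log Δ := log_nonneg (by linarith)
  have hpow : 8 * (Δ ^ 2 + 1) ≤ exp (6 * log Δ) := by
    rw [show (6 : ℝ) = (6 : ℕ) by norm_num, exp_nat_mul, exp_log (by linarith)]
    nlinarith [pow_le_pow_left₀ (by norm_num) hΔ 4]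
  calc 8 * (Δ ^ 2 + 1) * exp (-1e-9 * δ) ≤ exp (6 * log Δ) * exp (-(6 * log Δ)) := by
        gcongr
        nlinarith
    _ = 1 := by rw [← exp_add, add_neg_cancel, exp_zero]

theorem exists_finset_abs_card_inter_neighborFinset_sub_le {V : Type*} [Fintype V]
    [DecidableEq V] (G : SimpleGraph V) [DecidableRel G.Adj]
    (h : 8 * ((G.maxDegree : ℝ) ^ 2 + 1) * exp (-1e-9 * G.minDegree) ≤ 1) :
    ∃ U : Finset V, ∀ v,
      |(#(G.neighborFinset v ∩ U) : ℝ) - 1e-4 * G.degree v| ≤ 1e-6 * G.degree v := by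
  let p : I := ⟨1e-4, by norm_num, by norm_num⟩
  let μ := Measure.pi fun _ : V => Ber(true, false, p)
  set N : V → Finset V := fun v => G.neighborFinset v
  set A : V → Set (V → Bool) := fun v =>
    {ω | (1e-6 : ℝ) * #(N v) < |(#{u ∈ N v | ω u} : ℝ) - 1e-4 * #(N v)|}
  have hdep (v : V) : DependsOn (· ∈ A v) (N v : Set V) := fun ω ω' hωω' => by
    simp only [A, Set.mem_ofPred_eq]
    rw [filter_congr fun u hu => by rw [hωω' u hu]]
  have hA (v : V) : μ.real (A v) ≤ 2 * exp (-1e-9 * G.minDegree) := by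
    refine (measureReal_card_filter_deviation_le p rfl (N v)).trans ?_
    have : (G.minDegree : ℝ) ≤ #(N v) := by simpa [N] using G.minDegree_le_degree v
    gcongr 2 * exp ?_
    linarith
  have hind (v : V) (S : Finset V) (hS : Disjoint S ((N v).biUnion N)) :
      μ.real (A v ∩ ⋂ j ∈ S, (A j)ᶜ) ≤ μ.real (A v) * μ.real (⋂ j ∈ S, (A j)ᶜ) := by
    refine (measureReal_pi_inter_of_dependsOn _ (T := S.biUnion N) ?_ (hdep v) ?_).le
    · exact (disjoint_biUnion_right _ _ _).mpr fun j hj =>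
        (disjoint_neighborFinset_of_notMem_biUnion G (disjoint_left.mp hS hj)).symm
    · intro ω ω' hωω'
      simp only [Set.mem_iInter₂, Set.mem_compl_iff]
      refine propext (forall₂_congr fun j hj => not_congr (iff_of_eq ?_))
      exact hdep j fun u hu => hωω' u (by simp only [coe_biUnion]; exact Set.mem_biUnion hj hu)
  have hpos : 0 < μ.real (⋂ v, (A v)ᶜ) := by
    have := exp_pos (-1e-9 * G.minDegree)
    refine measureReal_iInter_compl_pos hA (card_biUnion_neighborFinset_le G) ?_ hind ?_
    · push_cast; nlinarith
    · nlinarith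
  obtain ⟨ω, hω⟩ := nonempty_of_measure_ne_zero ((measureReal_ne_zero_iff).mp hpos.ne')
  refine ⟨({u | ω u} : Finset V), fun v => ?_⟩
  have hv := Set.mem_iInter.mp hω v
  simp only [A, N, Set.mem_compl_iff, Set.mem_ofPred_eq, not_lt,
    G.card_neighborFinset_eq_degree] at hv
  rwa [inter_filter, inter_univ]

/-- There exists `Δ₀` such that every finite simple graph with maximum degree
`Δ ≥ Δ₀` and minimum degree `δ ≥ 10^20 * ln Δ` contains a set `U ⊆ V` with
`|d_U(v) − 10⁻⁴ d(v)| ≤ 10⁻⁶ d(v)` for every vertex `v`. -/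
theorem statement1 :
    ∃ Δ₀ : ℕ, ∀ (V : Type) [Fintype V] [DecidableEq V]
      (G : SimpleGraph V) [DecidableRel G.Adj],
      Δ₀ ≤ G.maxDegree →
      (1e20 : ℝ) * Real.log G.maxDegree ≤ (G.minDegree : ℝ) →
      ∃ U : Finset V, ∀ v : V,
        |(dIn G U v : ℝ) - 1e-4 * G.degree v| ≤ 1e-6 * G.degree v := by
  refine ⟨2, fun V _ _ G _ hΔ hδ => ?_⟩
  obtain ⟨U, hU⟩ := exists_finset_abs_card_inter_neighborFinset_sub_le G
    (eight_mul_sq_add_one_mul_exp_le_one (by exact_mod_cast hΔ) hδ)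
  exact ⟨U, hU⟩
end

section
/- There exists Δ₀ such that the following holds. Let G = (V,E) be a finite simple graph with maximum degree Δ ≥ Δ₀ and minimum degree δ ≥ 10^{20}·ln Δ, let U ⊆ V satisfy |d_U(v) − 10^{-4}·d(v)| ≤ 10^{-6}·d(v) for all v ∈ V, and set W = V ∖ U and F = E(U,W). Then there exists F_W ⊆ F such that for every w ∈ W one has |d_{F_W}(w) − 10^{-4}·d_U(w)| ≤ 10^{-6}·d_U(w), and for every u ∈ U one has |d_{F_W}(u) − 10^{-4}·d_W(u)| ≤ 10^{-6}·d_W(u). -/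
/-- Number of edges of the edge set `F` incident with `v`. -/
def dE {V : Type} [DecidableEq V] (F : Finset (Sym2 V)) (v : V) : ℕ :=
  (F.filter (fun e => v ∈ e)).card

/-- The set `E(A,B)` of edges of `G` with one end in `A` and the other in `B`. -/
def between {V : Type} [Fintype V] [DecidableEq V] (G : SimpleGraph V) [DecidableRel G.Adj]
    (A B : Finset V) : Finset (Sym2 V) :=
  G.edgeFinset.filter (fun e => ∃ a ∈ A, ∃ b ∈ B, e = s(a, b))

/-!
No randomness is needed. Every finite multigraph has an orientation in which in- and out-degree
differ by at most one at every vertex: split off two edges `vx, vy` at a vertex of degree at least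
two into a single edge `xy`, orient recursively and route `xy` back through `v`; a multigraph of
maximum degree at most one is oriented arbitrarily. If all edges of `F` cross the cut `(U, V ∖ U)`,
the edges oriented out of `U` form `H ⊆ F` with `|2 d_H(v) - d_F(v)| ≤ 1` everywhere. Halving
repeatedly along the binary expansion of `α` (passing to complements when `α > 1/2`) gives
`P ⊆ F` with `|d_P(v) - α d_F(v)| ≤ k + d_F(v) / 2^k`. For `F = E(U, W)` all degrees in `F` are at
least about `10⁻⁴ δ ≥ 10¹⁶`, so `k = 30` makes the error smaller than `10⁻⁶ d_F(v)`.
-/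

lemma Multiset.exists_eq_cons_cons_of_one_lt_countP {α : Type*} [DecidableEq α] {p : α → Prop}
    [DecidablePred p] {M : Multiset α} (h : 1 < M.countP p) :
    ∃ a b M₀, p a ∧ p b ∧ M = a ::ₘ b ::ₘ M₀ := by
  obtain ⟨a, ha, hpa⟩ := Multiset.countP_pos.1 (zero_lt_one.trans h)
  rw [← Multiset.cons_erase ha, Multiset.countP_cons, if_pos hpa] at h
  obtain ⟨b, hb, hpb⟩ := Multiset.countP_pos.1 (by omega : 0 < (M.erase a).countP p)
  exact ⟨a, b, (M.erase a).erase b, hpa, hpb, by rw [Multiset.cons_erase hb, Multiset.cons_erase ha]⟩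

lemma Multiset.countP_le_countP_of_imp {α : Type*} {p q : α → Prop} [DecidablePred p]
    [DecidablePred q] (h : ∀ a, p a → q a) (M : Multiset α) : M.countP p ≤ M.countP q := by
  simpa only [Multiset.countP_eq_card_filter] using
    Multiset.card_le_card (Multiset.monotone_filter_right M h)

section Orientation

variable {α : Type*} [DecidableEq α]

def outdeg (O : Multiset (α × α)) (v : α) : ℕ := O.countP (fun p => p.1 = v)

def indeg (O : Multiset (α × α)) (v : α) : ℕ := O.countP (fun p => p.2 = v)

@[simp] lemma outdeg_cons (p : α × α) (O : Multiset (α × α)) (v : α) :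
    outdeg (p ::ₘ O) v = outdeg O v + if p.1 = v then 1 else 0 :=
  Multiset.countP_cons _ _ _

@[simp] lemma indeg_cons (p : α × α) (O : Multiset (α × α)) (v : α) :
    indeg (p ::ₘ O) v = indeg O v + if p.2 = v then 1 else 0 :=
  Multiset.countP_cons _ _ _

theorem exists_orientation_abs_outdeg_sub_indeg_le_one (M : Multiset (Sym2 α)) :
    ∃ O : Multiset (α × α), O.map (Function.uncurry Sym2.mk) = M ∧
      ∀ v, |(outdeg O v : ℤ) - indeg O v| ≤ 1 := by
  induction hM : M.card using Nat.strong_induction_on generalizing M with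
  | _ n ih =>
  by_cases hdeg : ∃ v, 1 < M.countP (v ∈ ·)
  · obtain ⟨v, hv⟩ := hdeg
    obtain ⟨e₁, e₂, M₀, hv₁, hv₂, rfl⟩ := Multiset.exists_eq_cons_cons_of_one_lt_countP hv
    obtain ⟨x, rfl⟩ := Sym2.mem_iff_exists.1 hv₁
    obtain ⟨y, rfl⟩ := Sym2.mem_iff_exists.1 hv₂
    -- split off the two edges at `v`: orient `s(x, y)` inductively, then route it through `v`
    obtain ⟨O', hO'M, hO'⟩ := ih _ (by simp [← hM]) (s(x, y) ::ₘ M₀) rfl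
    obtain ⟨⟨a, b⟩, hab, habxy⟩ : ∃ p ∈ O', Function.uncurry Sym2.mk p = s(x, y) :=
      Multiset.mem_map.1 (hO'M ▸ Multiset.mem_cons_self _ _)
    rw [Function.uncurry_apply_pair] at habxy
    rw [← Multiset.cons_erase hab] at hO'M hO'
    refine ⟨(a, v) ::ₘ (v, b) ::ₘ O'.erase (a, b), ?_, fun z => ?_⟩
    · rw [Multiset.map_cons, Function.uncurry_apply_pair, habxy, Multiset.cons_inj_right] at hO'M
      simp only [Multiset.map_cons, hO'M, Function.uncurry_apply_pair]
      rcases Sym2.eq_iff.1 habxy with ⟨rfl, rfl⟩ | ⟨rfl, rfl⟩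
      · rw [Sym2.eq_swap]
      · rw [Multiset.cons_swap, Sym2.eq_swap, Sym2.eq_swap (a := a)]
    · have := hO' z
      simp only [outdeg, indeg, Multiset.countP_cons, abs_le] at this ⊢
      split_ifs at this ⊢ <;> omega
  · push Not at hdeg
    refine ⟨M.map Quot.out, ?_, fun v => ?_⟩
    · rw [Multiset.map_map]
      exact (Multiset.map_congr rfl fun e _ => Quot.out_eq e).trans (Multiset.map_id M)
    have hle : ∀ q : α × α → Prop, [DecidablePred q] → (∀ p, q p → v ∈ Function.uncurry Sym2.mk p) →
        (M.map Quot.out).countP q ≤ 1 := by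
      intro q _ hq
      refine (Multiset.countP_le_countP_of_imp hq _).trans ?_
      rw [Multiset.countP_map]
      simpa [Function.uncurry, Sym2.mk, Multiset.countP_eq_card_filter] using hdeg v
    have h1 := hle (fun p => p.1 = v) (fun p h => h ▸ Sym2.mem_mk_left _ _)
    have h2 := hle (fun p => p.2 = v) (fun p h => h ▸ Sym2.mem_mk_right _ _)
    simp only [outdeg, indeg, abs_le]
    omega

end Orientation

section Halving

variable {V : Type}

def CrossesCut (U : Finset V) (F : Finset (Sym2 V)) : Prop :=
  ∀ e ∈ F, ∃ a ∈ U, ∃ b ∉ U, e = s(a, b)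

lemma CrossesCut.mono {U : Finset V} {F H : Finset (Sym2 V)} (hF : CrossesCut U F) (hH : H ⊆ F) :
    CrossesCut U H :=
  fun e he => hF e (hH he)

variable [DecidableEq V]

lemma dE_eq_countP (F : Finset (Sym2 V)) (v : V) : dE F v = F.val.countP (v ∈ ·) :=
  (Multiset.countP_eq_card_filter _ _).symm

lemma countP_mem_map_of_crossing {U : Finset V} {O : Multiset (V × V)}
    (hO : ∀ p ∈ O, (p.1 ∈ U ↔ p.2 ∉ U)) (v : V) :
    (O.map (Function.uncurry Sym2.mk)).countP (v ∈ ·) = outdeg O v + indeg O v ∧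
      ((O.filter (·.1 ∈ U)).map (Function.uncurry Sym2.mk)).countP (v ∈ ·) =
        if v ∈ U then outdeg O v else indeg O v := by
  induction O using Multiset.induction_on with
  | empty => simp [outdeg, indeg]
  | cons p O ih =>
    obtain ⟨a, b⟩ := p
    have hab := hO (a, b) (Multiset.mem_cons_self _ _)
    obtain ⟨ih₁, ih₂⟩ := ih fun q hq => hO q (Multiset.mem_cons_of_mem hq)
    clear ih hO
    obtain ⟨ha, hb⟩ | ⟨ha, hb⟩ : (a ∈ U ∧ b ∉ U) ∨ (a ∉ U ∧ b ∈ U) := by tauto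
    all_goals
      simp only [Multiset.filter_cons, ha, if_true, if_false, Multiset.singleton_add, zero_add,
        Multiset.map_cons, Multiset.countP_cons, ih₁, ih₂, Function.uncurry_apply_pair,
        Sym2.mem_iff, outdeg_cons, indeg_cons]
      clear ih₁ ih₂ hab
      rcases eq_or_ne v a with rfl | hva <;> rcases eq_or_ne v b with rfl | hvb <;>
        simp_all [Ne.symm] <;> omega

theorem exists_half_of_crossesCut {U : Finset V} {F : Finset (Sym2 V)} (hF : CrossesCut U F) :
    ∃ H ⊆ F, ∀ v, |2 * (dE H v : ℤ) - dE F v| ≤ 1 := by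
  obtain ⟨O, hOF, hO⟩ := exists_orientation_abs_outdeg_sub_indeg_le_one F.val
  have hcross : ∀ p ∈ O, (p.1 ∈ U ↔ p.2 ∉ U) := by
    intro p hp
    obtain ⟨a, ha, b, hb, hab⟩ := hF _ (hOF ▸ Multiset.mem_map_of_mem _ hp : _ ∈ F.val)
    rcases Sym2.eq_iff.1 hab with ⟨h₁, h₂⟩ | ⟨h₁, h₂⟩ <;> simp_all
  have hle : (O.filter (·.1 ∈ U)).map (Function.uncurry Sym2.mk) ≤ F.val :=
    hOF ▸ Multiset.map_le_map (Multiset.filter_le _ _)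
  refine ⟨⟨_, Multiset.nodup_of_le hle F.nodup⟩, Multiset.subset_of_le hle, fun v => ?_⟩
  obtain ⟨hdF, hdH⟩ := countP_mem_map_of_crossing hcross v
  simp only [dE_eq_countP, ← hOF, hdF, hdH]
  have := abs_le.1 (hO v)
  split_ifs <;> rw [abs_le] <;> constructor <;> push_cast <;> linarith

lemma dE_sdiff_add_dE {Q F : Finset (Sym2 V)} (h : Q ⊆ F) (v : V) :
    dE (F \ Q) v + dE Q v = dE F v := by
  simp only [dE_eq_countP, ← Multiset.countP_add, Finset.sdiff_val,
    tsub_add_cancel_of_le (Finset.val_le_iff.2 h)]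

theorem exists_subset_abs_dE_sub_mul_le (U : Finset V) (k : ℕ) {F : Finset (Sym2 V)}
    (hF : CrossesCut U F) {α : ℝ} (hα₀ : 0 ≤ α) (hα₁ : α ≤ 1) :
    ∃ P ⊆ F, ∀ v, |(dE P v : ℝ) - α * dE F v| ≤ k + dE F v / 2 ^ k := by
  induction k generalizing F α with
  | zero =>
    refine ⟨∅, Finset.empty_subset _, fun v => ?_⟩
    have : α * (dE F v : ℝ) ≤ dE F v := mul_le_of_le_one_left (Nat.cast_nonneg _) hα₁
    simpa [dE, abs_of_nonneg hα₀] using this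
  | succ k ih =>
    have hlow : ∀ β : ℝ, 0 ≤ β → β ≤ 1 / 2 →
        ∃ P ⊆ F, ∀ v, |(dE P v : ℝ) - β * dE F v| ≤ ↑(k + 1) + dE F v / 2 ^ (k + 1) := by
      intro β hβ₀ hβ₁
      obtain ⟨H, hHF, hH⟩ := exists_half_of_crossesCut hF
      obtain ⟨P, hPH, hP⟩ := ih (hF.mono hHF) (α := 2 * β) (by linarith) (by linarith)
      refine ⟨P, hPH.trans hHF, fun v => ?_⟩
      have hHv : |2 * (dE H v : ℝ) - dE F v| ≤ 1 := by exact_mod_cast hH v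
      have hH_le : (dE H v : ℝ) / 2 ^ k ≤ dE F v / 2 ^ (k + 1) + 1 / 2 := by
        have h2 : 2 * (dE H v : ℝ) ≤ dE F v + 1 := by linarith [(abs_le.1 hHv).2]
        have hk : (1 : ℝ) / 2 ^ (k + 1) ≤ 1 / 2 :=
          one_div_le_one_div_of_le two_pos (le_self_pow₀ one_le_two k.succ_ne_zero)
        calc (dE H v : ℝ) / 2 ^ k = 2 * dE H v / 2 ^ (k + 1) := by rw [pow_succ]; ring
          _ ≤ (dE F v + 1) / 2 ^ (k + 1) := by gcongr
          _ ≤ dE F v / 2 ^ (k + 1) + 1 / 2 := by rw [add_div]; linarith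
      calc |(dE P v : ℝ) - β * dE F v|
          = |((dE P v : ℝ) - 2 * β * dE H v) + β * (2 * dE H v - dE F v)| := by
            congr 1; ring
        _ ≤ |(dE P v : ℝ) - 2 * β * dE H v| + β * |2 * (dE H v : ℝ) - dE F v| :=
          (abs_add_le _ _).trans_eq (by rw [abs_mul, abs_of_nonneg hβ₀])
        _ ≤ (k + dE H v / 2 ^ k) + 1 / 2 * 1 :=
          add_le_add (hP v) (mul_le_mul hβ₁ hHv (abs_nonneg _) (by norm_num))
        _ ≤ ↑(k + 1) + dE F v / 2 ^ (k + 1) := by push_cast; linarith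
    rcases le_total α (1 / 2) with hα | hα
    · exact hlow α hα₀ hα
    · -- complements turn an approximation of `1 - α` into one of `α`
      obtain ⟨Q, hQF, hQ⟩ := hlow (1 - α) (by linarith) (by linarith)
      refine ⟨F \ Q, Finset.sdiff_subset, fun v => ?_⟩
      have hsplit : (dE (F \ Q) v : ℝ) + dE Q v = dE F v := by exact_mod_cast dE_sdiff_add_dE hQF v
      calc |(dE (F \ Q) v : ℝ) - α * dE F v| = |(dE Q v : ℝ) - (1 - α) * dE F v| := by
            rw [← abs_neg]; congr 1; linarith
        _ ≤ _ := hQ v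

end Halving

section Graph

variable {V : Type} [Fintype V] [DecidableEq V] (G : SimpleGraph V) [DecidableRel G.Adj]

lemma between_comm (A B : Finset V) : between G A B = between G B A := by
  ext e
  simp only [between, Finset.mem_filter]
  constructor <;> rintro ⟨he, a, ha, b, hb, rfl⟩ <;> exact ⟨he, b, hb, a, ha, Sym2.eq_swap⟩

lemma dE_between_of_mem_left {A B : Finset V} (hAB : Disjoint A B) {v : V} (hv : v ∈ A) :
    dE (between G A B) v = dIn G B v := by
  have hinc : (between G A B).filter (v ∈ ·) = (G.neighborFinset v ∩ B).image (s(v, ·)) := by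
    ext e
    simp only [between, Finset.mem_filter, Finset.mem_image, Finset.mem_inter,
      SimpleGraph.mem_neighborFinset, SimpleGraph.mem_edgeFinset]
    constructor
    · rintro ⟨⟨hab, a, ha, b, hb, rfl⟩, hve⟩
      rcases Sym2.mem_iff.1 hve with rfl | rfl
      · exact ⟨b, ⟨hab, hb⟩, rfl⟩
      · exact absurd hb (Finset.disjoint_left.1 hAB hv)
    · rintro ⟨b, ⟨hvb, hb⟩, rfl⟩
      exact ⟨⟨hvb, v, hv, b, hb, rfl⟩, Sym2.mem_mk_left v b⟩
  rw [dE, dIn, hinc, Finset.card_image_of_injective _ fun x y h => Sym2.congr_right.1 h]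

lemma dE_between_of_mem_right {A B : Finset V} (hAB : Disjoint A B) {v : V} (hv : v ∈ B) :
    dE (between G A B) v = dIn G A v := by
  rw [between_comm]
  exact dE_between_of_mem_left G hAB.symm hv

lemma crossesCut_between (U : Finset V) : CrossesCut U (between G U (Finset.univ \ U)) := by
  intro e he
  obtain ⟨-, a, ha, b, hb, rfl⟩ := Finset.mem_filter.1 he
  exact ⟨a, ha, b, (Finset.mem_sdiff.1 hb).2, rfl⟩

lemma dIn_add_dIn_compl (U : Finset V) (v : V) :
    dIn G U v + dIn G (Finset.univ \ U) v = G.degree v := by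
  have hcompl : G.neighborFinset v ∩ (Finset.univ \ U) = G.neighborFinset v \ U := by
    ext; simp
  rw [dIn, dIn, hcompl, Finset.card_inter_add_card_sdiff, G.card_neighborFinset_eq_degree]

end Graph

/-- Given `U` as in Statement 1, with `W = V ∖ U` and `F = E(U,W)`, one can choose
`F_W ⊆ F` with `|d_{F_W}(w) − 10⁻⁴ d_U(w)| ≤ 10⁻⁶ d_U(w)` for all `w ∈ W` and
`|d_{F_W}(u) − 10⁻⁴ d_W(u)| ≤ 10⁻⁶ d_W(u)` for all `u ∈ U`. -/
theorem statement2 :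
    ∃ Δ₀ : ℕ, ∀ (V : Type) [Fintype V] [DecidableEq V]
      (G : SimpleGraph V) [DecidableRel G.Adj],
      Δ₀ ≤ G.maxDegree →
      (1e20 : ℝ) * Real.log G.maxDegree ≤ (G.minDegree : ℝ) →
      ∀ U : Finset V,
        (∀ v : V, |(dIn G U v : ℝ) - 1e-4 * G.degree v| ≤ 1e-6 * G.degree v) →
        ∃ F_W ⊆ between G U (Finset.univ \ U),
          (∀ w ∈ Finset.univ \ U,
            |(dE F_W w : ℝ) - 1e-4 * dIn G U w| ≤ 1e-6 * dIn G U w) ∧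
          (∀ u ∈ U,
            |(dE F_W u : ℝ) - 1e-4 * dIn G (Finset.univ \ U) u| ≤
              1e-6 * dIn G (Finset.univ \ U) u) := by
  refine ⟨3, fun V _ _ G _ hΔ hδ U hU => ?_⟩
  have hlog : 1 ≤ Real.log G.maxDegree := by
    rw [Real.le_log_iff_exp_le (by positivity)]
    exact Real.exp_one_lt_three.le.trans (by exact_mod_cast hΔ)
  have hdeg : ∀ v, (1e20 : ℝ) ≤ G.degree v := fun v =>
    (le_mul_of_one_le_right (by norm_num) hlog).trans
      (hδ.trans (by exact_mod_cast G.minDegree_le_degree v))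
  obtain ⟨P, hPF, hP⟩ := exists_subset_abs_dE_sub_mul_le U 30 (crossesCut_between G U)
    (α := 1e-4) (by norm_num) (by norm_num)
  have hsep : Disjoint U (Finset.univ \ U) := Finset.disjoint_sdiff
  have happrox : ∀ v (d : ℕ), dE (between G U (Finset.univ \ U)) v = d → (1e8 : ℝ) ≤ d →
      |(dE P v : ℝ) - 1e-4 * d| ≤ 1e-6 * d := by
    intro v d hd hd8
    refine (hd ▸ hP v).trans ?_
    push_cast
    linarith
  refine ⟨P, hPF, fun w hw => happrox w _ (dE_between_of_mem_right G hsep hw) ?_,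
    fun u hu => happrox u _ (dE_between_of_mem_left G hsep hu) ?_⟩
  · linarith [(abs_le.1 (hU w)).1, hdeg w]
  · have : (dIn G U u : ℝ) + dIn G (Finset.univ \ U) u = G.degree u := by
      exact_mod_cast dIn_add_dIn_compl G U u
    linarith [(abs_le.1 (hU u)).2, hdeg u]
end

section
/- The function x ↦ (x−1)/2 − (1/ln(2.9/1.1))·ln(2.9/(1 + 2·ln(2.9/x)/ln(2.9/1.1))) is strictly decreasing on the interval [a₁, a₂]. -/
noncomputable def a₁ : ℝ := 2.9 / (2.9 / 1.1) ^ (0.95 : ℝ)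
noncomputable def a₂ : ℝ := 2.9 / (2.9 / 1.1) ^ (0.45 : ℝ)

/-!
With `L = log (2.9 / 1.1) ≈ 0.969`, the derivative of the function at `0 < x < 2.9` is
`1/2 - 2 / (L x (L + 2 log (2.9/x)))`, so it suffices that `L x (L + 2 log (2.9/x)) < 4`.
Since `x log (2.9/x) ≤ 2.9/e` and `x ≤ a₂ < 1.95`, the left side is at most
`1.95 L² + 5.8 L / e < 3.97`.
-/

open Real Set

namespace Real

lemma log_le_div_exp_one {y : ℝ} (hy : 0 < y) : log y ≤ y / exp 1 := by
  rw [le_div_iff₀ (exp_pos 1), mul_comm]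
  simpa only [exp_log hy] using exp_one_mul_le_exp (x := log y)

lemma mul_log_div_le {c x : ℝ} (hc : 0 < c) (hx : 0 < x) : x * log (c / x) ≤ c / exp 1 := by
  have h := log_le_div_exp_one (div_pos hc hx)
  calc x * log (c / x) ≤ x * (c / x / exp 1) := mul_le_mul_of_nonneg_left h hx.le
    _ = c / exp 1 := by field_simp

end Real

lemma hasDerivAt_sub_log_div_log {c L x : ℝ} (hL : 0 < L) (hx : 0 < x) (hxc : x < c) :
    HasDerivAt (fun y : ℝ => (y - 1) / 2 - (1 / L) * log (c / (1 + 2 * log (c / y) / L)))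
      (1 / 2 - 2 / (L * x * (L + 2 * log (c / x)))) x := by
  have hc : c ≠ 0 := (hx.trans hxc).ne'
  have ht : 0 < log (c / x) := log_pos ((one_lt_div hx).2 hxc)
  have hH : 1 + 2 * log (c / x) / L ≠ 0 := by positivity
  have hlog : HasDerivAt (fun y => log (c / y)) (-x⁻¹) x := by
    refine (((hasDerivAt_const x c).div (hasDerivAt_id x) hx.ne').log
      (div_ne_zero hc hx.ne')).congr_deriv ?_
    simp only [Pi.div_apply, id]
    field_simp
    ring
  have hquot := (hasDerivAt_const x c).div (((hlog.const_mul 2).div_const L).const_add 1) hH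
  refine ((((hasDerivAt_id x).sub_const 1).div_const 2).sub
    ((hquot.log (div_ne_zero hc hH)).const_mul (1 / L))).congr_deriv ?_
  simp only [Pi.div_apply]
  field_simp
  ring

lemma log_twentynine_div_eleven_gt : 0.94 < log (2.9 / 1.1) := by
  rw [lt_log_iff_exp_lt (by norm_num)]
  have h1 := add_one_le_exp 0.06
  have h2 : exp 0.94 * exp 0.06 = exp 1 := by rw [← exp_add]; norm_num
  nlinarith [exp_one_lt_d9, exp_pos 0.94]

lemma log_twentynine_div_eleven_lt : log (2.9 / 1.1) < 0.98 := by
  rw [log_lt_iff_lt_exp (by norm_num)]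
  have h1 := add_one_le_exp (-0.02)
  have h2 : exp 1 * exp (-0.02) = exp 0.98 := by rw [← exp_add]; norm_num
  nlinarith [exp_one_gt_d9, exp_pos 1]

lemma a₁_pos : 0 < a₁ := by
  unfold a₁; positivity

lemma a₂_le : a₂ ≤ 1.95 := by
  have hexp : 2.9 / 1.95 ≤ (2.9 / 1.1 : ℝ) ^ (0.45 : ℝ) := by
    rw [rpow_def_of_pos (by norm_num)]
    have := quadratic_le_exp_of_nonneg (x := log (2.9 / 1.1) * 0.45)
      (by linarith [log_twentynine_div_eleven_gt])
    nlinarith [log_twentynine_div_eleven_gt]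
  rw [a₂, div_le_iff₀ (by positivity)]
  rw [div_le_iff₀ (by norm_num)] at hexp
  linarith

lemma half_sub_two_div_neg {x : ℝ} (hx : 0 < x) (hx' : x ≤ 1.95) :
    1 / 2 - 2 / (log (2.9 / 1.1) * x * (log (2.9 / 1.1) + 2 * log (2.9 / x))) < 0 := by
  set L := log (2.9 / 1.1)
  have hL₀ : 0.94 < L := log_twentynine_div_eleven_gt
  have hL₁ : L < 0.98 := log_twentynine_div_eleven_lt
  have ht : 0 < log (2.9 / x) := log_pos ((one_lt_div hx).2 (by linarith))
  have hxt := mul_log_div_le (c := 2.9) (by norm_num) hx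
  have he : 2.9 / exp 1 < 1.067 := by
    rw [div_lt_iff₀ (exp_pos 1)]; linarith [exp_one_gt_d9]
  have hLxt : L * (x * log (2.9 / x)) ≤ 0.98 * 1.067 :=
    (mul_le_mul_of_nonneg_left hxt (by positivity)).trans
      (mul_le_mul hL₁.le he.le (by positivity) (by norm_num))
  rw [sub_neg, div_lt_div_iff₀ (by norm_num) (by positivity)]
  nlinarith [mul_le_mul_of_nonneg_left hx' (sq_nonneg L)]

/-- The middle branch of `r` is strictly decreasing on `[a₁, a₂]`. -/
theorem statement7 :
    StrictAntiOn (fun x : ℝ => (x - 1) / 2 - (1 / Real.log (2.9 / 1.1)) *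
      Real.log (2.9 / (1 + 2 * Real.log (2.9 / x) / Real.log (2.9 / 1.1))))
      (Set.Icc a₁ a₂) := by
  have hmem {x : ℝ} (hx : x ∈ Icc a₁ a₂) : 0 < x ∧ x ≤ 1.95 :=
    ⟨a₁_pos.trans_le hx.1, hx.2.trans a₂_le⟩
  have hderiv {x : ℝ} (hx : x ∈ Icc a₁ a₂) :=
    hasDerivAt_sub_log_div_log (c := 2.9) (log_pos (by norm_num : (1 : ℝ) < 2.9 / 1.1)) (hmem hx).1
      ((hmem hx).2.trans_lt (by norm_num))
  exact strictAntiOn_of_hasDerivWithinAt_neg (convex_Icc a₁ a₂)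
    (fun x hx => (hderiv hx).continuousAt.continuousWithinAt)
    (fun x hx => (hderiv (interior_subset hx)).hasDerivWithinAt)
    fun x hx => half_sub_two_div_neg (hmem (interior_subset hx)).1 (hmem (interior_subset hx)).2
end
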